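/- arXiv:2003.10787 — 5 statements merged into one kernel-verified Lean document; each statement's English description precedes it below -/
import Mathlib

section
/- Let F₁^{σ₁}, F₂^{σ₂} be turbofunctions with σ₁, σ₂ strictly increasing. If ρ⁺(F₁^{σ₁}, F₂^{σ₂}) = 0, then there exists an increasing homeomorphism γ of [0,1] with F₂ = F₁ ∘ γ and σ₂ = σ₁ ∘ γ; indeed γ = σ₁⁻¹ ∘ σ₂ works. -/
open Filter

/-- A càdlàg function on `[0,1]`: right-continuous on `[0,1)`, left limits on `(0,1]`. -/
def Cadlag (f : unitInterval → ℝ) : Prop :=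
  (∀ t : unitInterval, (t : ℝ) < 1 →
    Filter.Tendsto f (nhdsWithin t (Set.Ioi t)) (nhds (f t))) ∧
  (∀ t : unitInterval, 0 < (t : ℝ) →
    ∃ l : ℝ, Filter.Tendsto f (nhdsWithin t (Set.Iio t)) (nhds l))

/-- Increasing homeomorphism of `[0,1]` onto itself. -/
def IsIncHomeo (γ : unitInterval → unitInterval) : Prop :=
  Continuous γ ∧ StrictMono γ ∧ Function.Bijective γ

/-- `Σ`: continuous non-decreasing surjections of `[0,1]` onto itself. -/
def InSigma (σ : unitInterval → unitInterval) : Prop :=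
  Continuous σ ∧ Monotone σ ∧ Function.Surjective σ

/-- Skorokhod distance on functions on `[0,1]`. -/
noncomputable def skorokhodDist (f g : unitInterval → ℝ) : ℝ :=
  sInf { c : ℝ | ∃ γ : unitInterval → unitInterval, IsIncHomeo γ ∧
    (⨆ s : unitInterval, |f s - g (γ s)|) + (⨆ s : unitInterval, |(s : ℝ) - (γ s : ℝ)|) = c }

/-- Extended Skorokhod semi-distance on turbofunctions. -/
noncomputable def rhoPlus (P Q : (unitInterval → ℝ) × (unitInterval → unitInterval)) : ℝ :=
  sInf { c : ℝ | ∃ γ : unitInterval → unitInterval, IsIncHomeo γ ∧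
    (⨆ t : unitInterval, |P.1 (γ t) - Q.1 t|) +
    (⨆ t : unitInterval, |(P.2 (γ t) : ℝ) - (Q.2 t : ℝ)|) = c }

instance : Fact ((0:ℝ) ≤ 1) := ⟨zero_le_one⟩

/-- Right-continuous inverse `σ⁻¹(s) = max {t : σ t ≤ s}` (as a supremum). -/
noncomputable def rcInv (σ : unitInterval → unitInterval) (s : unitInterval) : unitInterval :=
  sSup {t : unitInterval | σ t ≤ s}

/-!
From `ρ⁺ = 0` one extracts increasing homeomorphisms `g n` with `F₁ ∘ g n → F₂` and
`σ₁ ∘ g n → σ₂` uniformly; boundedness of càdlàg functions is what makes the suprema in `ρ⁺`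
genuine (an unbounded `⨆` is `0` in `ℝ`). Composing with the uniformly continuous `σ₁⁻¹` gives
`g n → γ := σ₁⁻¹ ∘ σ₂` uniformly. To see `F₂ t = F₁ (γ t)`, evaluate at
`u n := max t ((g n)⁻¹ (γ t))`: then `u n → t` from the right and `g n (u n) = max (g n t) (γ t)`
tends to `γ t` from the right, so right-continuity of `F₁` and `F₂` lets one pass to the limit.
-/

open Topology Set Bornology Metric Function

theorem TendstoUniformly.tendsto_comp_iff {ι α β : Type*} [UniformSpace β] {F : ι → α → β}
    {f : α → β} {p : Filter ι} (h : TendstoUniformly F f p) (x : ι → α) {y : β} :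
    Tendsto (fun i => F i (x i)) p (𝓝 y) ↔ Tendsto (fun i => f (x i)) p (𝓝 y) :=
  (Uniform.tendsto_congr
    ((tendstoUniformly_iff_tendsto.1 h).comp (tendsto_id.prodMk tendsto_top))).symm

theorem eq_comp_of_tendstoUniformly {ι α β E : Type*}
    [LinearOrder α] [TopologicalSpace α] [OrderClosedTopology α]
    [LinearOrder β] [UniformSpace β] [OrderClosedTopology β] [UniformSpace E] [T2Space E]
    {F₁ : β → E} {F₂ : α → E}
    (hF₁ : ∀ y, ContinuousWithinAt F₁ (Ici y) y) (hF₂ : ∀ x, ContinuousWithinAt F₂ (Ici x) x)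
    {p : Filter ι} [p.NeBot] {g : ι → α → β} (hg_mono : ∀ i, Monotone (g i))
    (hg_surj : ∀ i, Surjective (g i)) (γ : α ≃ₜ β) (hgγ : TendstoUniformly g γ p)
    (hF : TendstoUniformly (fun i s => F₁ (g i s)) F₂ p) :
    F₂ = F₁ ∘ γ := by
  funext t
  choose b hb using fun i => hg_surj i (γ t)
  have hb_lim : Tendsto b p (𝓝 t) := by
    have : Tendsto (fun i => γ (b i)) p (𝓝 (γ t)) :=
      (hgγ.tendsto_comp_iff b).1 (by simp only [hb]; exact tendsto_const_nhds)
    simpa only [comp_def, Homeomorph.symm_apply_apply] using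
      (γ.symm.continuous.tendsto _).comp this
  set u := fun i => max t (b i)
  have hu : Tendsto u p (𝓝[≥] t) :=
    tendsto_nhdsWithin_iff.2
      ⟨by simpa only [max_self] using (tendsto_const_nhds (x := t)).max hb_lim,
        .of_forall fun i => le_max_left _ _⟩
  have hgu : Tendsto (fun i => g i (u i)) p (𝓝[≥] (γ t)) := by
    have h_eq : ∀ i, g i (u i) = max (g i t) (γ t) := fun i => by
      rw [(hg_mono i).map_max, hb]
    simp only [h_eq]
    exact tendsto_nhdsWithin_iff.2
      ⟨by simpa only [max_self] using (hgγ.tendsto_at t).max (tendsto_const_nhds (x := γ t)),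
        .of_forall fun i => le_max_right _ _⟩
  have h₁ : Tendsto (fun i => F₂ (u i)) p (𝓝 (F₁ (γ t))) :=
    (hF.tendsto_comp_iff u).1 ((hF₁ (γ t)).tendsto.comp hgu)
  exact tendsto_nhds_unique ((hF₂ t).tendsto.comp hu) h₁

namespace Cadlag

variable {f : unitInterval → ℝ}

lemma continuousWithinAt_Ici (hf : Cadlag f) (x : unitInterval) :
    ContinuousWithinAt f (Ici x) x := by
  rcases x.2.2.lt_or_eq with hx | hx
  · exact continuousWithinAt_Ioi_iff_Ici.1 (hf.1 x hx)
  · rw [show x = ⊤ from Subtype.ext hx, Ici_top]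
    exact continuousWithinAt_singleton

lemma exists_tendsto_nhdsLT (hf : Cadlag f) (x : unitInterval) :
    ∃ l, Tendsto f (𝓝[<] x) (𝓝 l) := by
  rcases x.2.1.lt_or_eq with hx | hx
  · exact hf.2 x hx
  · rw [show x = ⊥ from Subtype.ext hx.symm, Set.Iio_bot, nhdsWithin_empty]
    exact ⟨0, tendsto_bot⟩

lemma isBounded_range (hf : Cadlag f) : IsBounded (range f) := by
  rw [← image_univ]
  refine isBounded_image_of_isLocallyBounded_of_isCompact isCompact_univ fun x => ?_
  obtain ⟨l, hl⟩ := hf.exists_tendsto_nhdsLT x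
  set B := ball l 1 ∪ ball (f x) 1
  refine ⟨f ⁻¹' B, ?_, (isBounded_ball.union isBounded_ball).subset (image_preimage_subset f B)⟩
  rw [← nhdsLT_sup_nhdsGE, mem_sup]
  exact ⟨hl (mem_of_superset (ball_mem_nhds l one_pos) subset_union_left),
    hf.continuousWithinAt_Ici x (mem_of_superset (ball_mem_nhds _ one_pos) subset_union_right)⟩

end Cadlag

lemma OrderIso.isIncHomeo (e : unitInterval ≃o unitInterval) : IsIncHomeo e :=
  ⟨e.continuous, e.strictMono, e.bijective⟩

lemma exists_isIncHomeo_lt_of_rhoPlus_lt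
    {P Q : (unitInterval → ℝ) × (unitInterval → unitInterval)}
    (hP : IsBounded (range P.1)) (hQ : IsBounded (range Q.1)) {ε : ℝ} (h : rhoPlus P Q < ε) :
    ∃ γ, IsIncHomeo γ ∧ ∀ t, |P.1 (γ t) - Q.1 t| < ε ∧ |(P.2 (γ t) : ℝ) - Q.2 t| < ε := by
  have hF_nonneg (γ : unitInterval → unitInterval) :=
    Real.iSup_nonneg fun t => abs_nonneg (P.1 (γ t) - Q.1 t)
  have hσ_nonneg (γ : unitInterval → unitInterval) :=
    Real.iSup_nonneg fun t => abs_nonneg ((P.2 (γ t) : ℝ) - Q.2 t)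
  obtain ⟨_, ⟨γ, hγ, rfl⟩, hlt⟩ :=
    exists_lt_of_csInf_lt (by exact ⟨_, id, ⟨continuous_id, strictMono_id, bijective_id⟩, rfl⟩) h
  obtain ⟨M₁, hM₁⟩ := isBounded_iff_forall_norm_le.1 hP
  obtain ⟨M₂, hM₂⟩ := isBounded_iff_forall_norm_le.1 hQ
  have hF_bdd : BddAbove (range fun t => |P.1 (γ t) - Q.1 t|) := by
    refine ⟨M₁ + M₂, forall_mem_range.2 fun t => (abs_sub _ _).trans ?_⟩
    exact add_le_add (hM₁ _ (mem_range_self _)) (hM₂ _ (mem_range_self _))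
  have hσ_bdd : BddAbove (range fun t => |(P.2 (γ t) : ℝ) - Q.2 t|) := by
    refine ⟨1, forall_mem_range.2 fun t => abs_sub_le_iff.2 ⟨?_, ?_⟩⟩ <;>
      linarith [(P.2 (γ t)).2.1, (P.2 (γ t)).2.2, (Q.2 t).2.1, (Q.2 t).2.2]
  exact ⟨γ, hγ, fun t => ⟨(le_ciSup hF_bdd t).trans_lt (by linarith [hσ_nonneg γ]),
    (le_ciSup hσ_bdd t).trans_lt (by linarith [hF_nonneg γ])⟩⟩

lemma exists_tendstoUniformly_of_rhoPlus_eq_zero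
    {P Q : (unitInterval → ℝ) × (unitInterval → unitInterval)}
    (hP : IsBounded (range P.1)) (hQ : IsBounded (range Q.1)) (h : rhoPlus P Q = 0) :
    ∃ g : ℕ → unitInterval → unitInterval, (∀ n, IsIncHomeo (g n)) ∧
      TendstoUniformly (fun n t => P.1 (g n t)) Q.1 atTop ∧
      TendstoUniformly (fun n t => P.2 (g n t)) Q.2 atTop := by
  choose g hg hg_lt using fun n : ℕ =>
    exists_isIncHomeo_lt_of_rhoPlus_lt hP hQ (h.trans_lt (Nat.one_div_pos_of_nat (n := n)))
  have h_eventually {ε : ℝ} (hε : 0 < ε) : ∀ᶠ n : ℕ in atTop, 1 / ((n : ℝ) + 1) < ε := by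
    obtain ⟨N, hN⟩ := exists_nat_one_div_lt hε
    filter_upwards [eventually_ge_atTop N] with n hn
    exact (Nat.one_div_le_one_div hn).trans_lt hN
  refine ⟨g, hg, ?_, ?_⟩ <;> refine Metric.tendstoUniformly_iff.2 fun ε hε => ?_ <;>
    filter_upwards [h_eventually hε] with n hn t
  · rw [Real.dist_eq, abs_sub_comm]
    exact (hg_lt n t).1.trans hn
  · rw [Subtype.dist_eq, Real.dist_eq, abs_sub_comm]
    exact (hg_lt n t).2.trans hn

theorem rhoPlus_zero_implies_homeo_equiv (F₁ F₂ : unitInterval → ℝ)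
    (σ₁ σ₂ : unitInterval → unitInterval)
    (hF₁ : Cadlag F₁) (hF₂ : Cadlag F₂) (hσ₁ : InSigma σ₁) (hσ₂ : InSigma σ₂)
    (hs₁ : StrictMono σ₁) (hs₂ : StrictMono σ₂)
    (h : rhoPlus (F₁, σ₁) (F₂, σ₂) = 0) :
    ∃ γ : unitInterval → unitInterval, IsIncHomeo γ ∧ F₂ = F₁ ∘ γ ∧ σ₂ = σ₁ ∘ γ := by
  obtain ⟨g, hg, hgF, hgσ⟩ :=
    exists_tendstoUniformly_of_rhoPlus_eq_zero hF₁.isBounded_range hF₂.isBounded_range h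
  let e₁ := hs₁.orderIsoOfSurjective σ₁ hσ₁.2.2
  let e₂ := hs₂.orderIsoOfSurjective σ₂ hσ₂.2.2
  let γ := e₂.trans e₁.symm
  have hσ : σ₂ = σ₁ ∘ γ := funext fun s => (e₁.apply_symm_apply (σ₂ s)).symm
  have hgγ : TendstoUniformly g γ atTop := by
    have := (CompactSpace.uniformContinuous_of_continuous
      e₁.symm.continuous).comp_tendstoUniformly hgσ
    convert this using 1
    · funext n t
      exact (e₁.symm_apply_apply (g n t)).symm
    · rfl
  refine ⟨γ, γ.isIncHomeo, ?_, hσ⟩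
  exact eq_comp_of_tendstoUniformly hF₁.continuousWithinAt_Ici hF₂.continuousWithinAt_Ici
    (fun n => (hg n).2.1.monotone) (fun n => (hg n).2.2.2) γ.toHomeomorph hgγ hgF
end

section
/- Let F_𝟏 be the constant function 1, ς the identity of [0,1], and σ ∈ Σ any continuous non-decreasing surjection of [0,1]. Then ρ⁺((F_𝟏)^ς, (F_𝟏)^σ) = 0; however, if σ is not strictly increasing, there is no increasing homeomorphism γ of [0,1] with σ = ς ∘ γ. -/
open Filter

local notation "I" => unitInterval

/-!
Tilting `σ` towards the identity, `γ_r t = (1 - r) σ(t) + r t` with `r > 0`, gives increasing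
homeomorphisms with `|γ_r - σ| ≤ r`; since the constant first components contribute nothing,
`ρ⁺` vanishes. On the other hand `σ = id ∘ γ` forces `σ = γ` to be strictly increasing.
-/

theorem Monotone.map_bot_of_surjective {α β : Type*} [Preorder α] [OrderBot α] [PartialOrder β]
    [OrderBot β] {f : α → β} (hf : Monotone f) (hs : Function.Surjective f) : f ⊥ = ⊥ := by
  obtain ⟨a, ha⟩ := hs ⊥
  exact le_bot_iff.mp (ha ▸ hf bot_le)

theorem Monotone.map_top_of_surjective {α β : Type*} [Preorder α] [OrderTop α] [PartialOrder β]
    [OrderTop β] {f : α → β} (hf : Monotone f) (hs : Function.Surjective f) : f ⊤ = ⊤ :=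
  hf.dual.map_bot_of_surjective hs

theorem InSigma.map_zero {σ : I → I} (hσ : InSigma σ) : σ 0 = 0 :=
  hσ.2.1.map_bot_of_surjective hσ.2.2

theorem InSigma.map_one {σ : I → I} (hσ : InSigma σ) : σ 1 = 1 :=
  hσ.2.1.map_top_of_surjective hσ.2.2

theorem isIncHomeo_of_strictMono {γ : I → I} (hc : Continuous γ) (hm : StrictMono γ)
    (h0 : γ 0 = 0) (h1 : γ 1 = 1) : IsIncHomeo γ := by
  refine ⟨hc, hm, hm.injective, fun y => ?_⟩
  have hrange := intermediate_value_univ (0 : I) 1 hc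
  rw [h0, h1] at hrange
  exact hrange ⟨unitInterval.nonneg', unitInterval.le_one'⟩

theorem abs_convexComb_sub_le (x y r : I) : |(Set.Icc.convexComb x y r : ℝ) - x| ≤ r := by
  have hxy : |(y : ℝ) - x| ≤ 1 := abs_sub_le_iff.mpr
    ⟨by linarith [y.2.2, x.2.1], by linarith [x.2.2, y.2.1]⟩
  calc |(Set.Icc.convexComb x y r : ℝ) - x| = r * |(y : ℝ) - x| := by
        rw [Set.Icc.coe_convexComb, show (1 - (r : ℝ)) * x + r * y - x = r * (y - x) by ring,
          abs_mul, abs_of_nonneg r.2.1]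
    _ ≤ r := mul_le_of_le_one_right r.2.1 hxy

theorem InSigma.isIncHomeo_convexComb {σ : I → I} (hσ : InSigma σ) {r : I} (hr : 0 < r) :
    IsIncHomeo fun t => Set.Icc.convexComb (σ t) t r := by
  refine isIncHomeo_of_strictMono ?_ (fun t u htu => ?_) ?_ ?_
  · exact Set.Icc.continuous_convexComb_prod.comp
      (hσ.1.prodMk (continuous_id.prodMk continuous_const))
  · show (1 - (r : ℝ)) * σ t + r * t < (1 - r) * σ u + r * u
    have hσtu : (σ t : ℝ) ≤ σ u := hσ.2.1 htu.le
    have htu' : (t : ℝ) < u := htu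
    have hr' : (0 : ℝ) < r := hr
    nlinarith [r.2.2]
  · simp only [hσ.map_zero, Set.Icc.convexComb_eq]
  · simp only [hσ.map_one, Set.Icc.convexComb_eq]

theorem InSigma.exists_isIncHomeo_abs_sub_le {σ : I → I} (hσ : InSigma σ) {ε : ℝ} (hε : 0 < ε) :
    ∃ γ : I → I, IsIncHomeo γ ∧ ∀ t, |(γ t : ℝ) - σ t| ≤ ε := by
  let r : I := ⟨min ε 1, le_min hε.le zero_le_one, min_le_right _ _⟩
  refine ⟨_, hσ.isIncHomeo_convexComb (r := r) (lt_min hε one_pos), fun t => ?_⟩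
  exact (abs_convexComb_sub_le _ _ r).trans (min_le_left _ _)

theorem rhoPlus_nonneg (P Q : (I → ℝ) × (I → I)) : 0 ≤ rhoPlus P Q :=
  Real.sInf_nonneg <| by
    rintro _ ⟨γ, -, rfl⟩
    exact add_nonneg (Real.iSup_nonneg fun _ => abs_nonneg _)
      (Real.iSup_nonneg fun _ => abs_nonneg _)

theorem rhoPlus_le (P Q : (I → ℝ) × (I → I)) {γ : I → I} (hγ : IsIncHomeo γ) :
    rhoPlus P Q ≤ (⨆ t, |P.1 (γ t) - Q.1 t|) + ⨆ t, |(P.2 (γ t) : ℝ) - Q.2 t| := by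
  refine csInf_le ⟨0, ?_⟩ ⟨γ, hγ, rfl⟩
  rintro _ ⟨γ, -, rfl⟩
  exact add_nonneg (Real.iSup_nonneg fun _ => abs_nonneg _)
    (Real.iSup_nonneg fun _ => abs_nonneg _)

theorem const_one_counterexample (σ₀ : unitInterval → unitInterval) (hσ : InSigma σ₀) :
    rhoPlus ((fun _ => (1 : ℝ)), id) ((fun _ => (1 : ℝ)), σ₀) = 0 ∧
    (¬ StrictMono σ₀ →
      ¬ ∃ γ : unitInterval → unitInterval, IsIncHomeo γ ∧ σ₀ = id ∘ γ) := by
  refine ⟨le_antisymm (le_of_forall_pos_le_add fun ε hε => ?_) (rhoPlus_nonneg _ _), ?_⟩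
  · obtain ⟨γ, hγ, hclose⟩ := hσ.exists_isIncHomeo_abs_sub_le hε
    refine (rhoPlus_le _ _ hγ).trans ?_
    simp only [id, sub_self, abs_zero, ciSup_const, zero_add]
    exact Real.iSup_le hclose hε.le
  · rintro hnot ⟨γ, hγ, rfl⟩
    exact hnot hγ.2.1
end

section
/- The image {f⁺ : f ∈ D[0,1]} is dense in (D⁺, ρ⁺): for every turbofunction F^σ ∈ D⁺ and every ε > 0 there exists f ∈ D[0,1] with ρ⁺(F^σ, f⁺) < ε. -/
open Filter

theorem embedding_dense (F : unitInterval → ℝ) (σ₀ : unitInterval → unitInterval)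
    (hF : Cadlag F) (hσ : InSigma σ₀) :
    ∀ ε : ℝ, 0 < ε → ∃ f : unitInterval → ℝ, Cadlag f ∧
      rhoPlus (F, σ₀) (f, id) < ε := by
  intro ε hε
  obtain ⟨hcont, hmono, hsurj⟩ := hσ
  set δ : ℝ := ε / 2 with hδdef
  have hδpos : 0 < δ := by positivity
  have hden : (0:ℝ) < 1 + δ := by linarith
  -- σ₀ fixes the endpoints
  have hσend0 : σ₀ 0 = 0 := by
    obtain ⟨t, ht⟩ := hsurj 0
    have h1 : σ₀ 0 ≤ σ₀ t := hmono unitInterval.nonneg'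
    rw [ht] at h1
    exact le_antisymm h1 unitInterval.nonneg'
  have hσend1 : σ₀ 1 = 1 := by
    obtain ⟨t, ht⟩ := hsurj 1
    have h1 : σ₀ t ≤ σ₀ 1 := hmono unitInterval.le_one'
    rw [ht] at h1
    exact le_antisymm unitInterval.le_one' h1
  -- the perturbed map h(t) = (σ₀ t + δ t)/(1+δ)
  have hmem : ∀ t : unitInterval, ((σ₀ t : ℝ) + δ * t) / (1 + δ) ∈ unitInterval := by
    intro t
    constructor
    · apply div_nonneg _ hden.le
      have := (σ₀ t).2.1
      have := t.2.1
      nlinarith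
    · rw [div_le_one hden]
      have := (σ₀ t).2.2
      have := t.2.2
      nlinarith
  set hmap : unitInterval → unitInterval :=
    fun t => ⟨((σ₀ t : ℝ) + δ * t) / (1 + δ), hmem t⟩ with hmapdef
  have hsm : StrictMono hmap := by
    intro a b hab
    rw [← Subtype.coe_lt_coe]
    have h1 : (σ₀ a : ℝ) ≤ σ₀ b := hmono hab.le
    have h2 : (a : ℝ) < b := hab
    have h3 : (σ₀ a : ℝ) + δ * a < (σ₀ b : ℝ) + δ * b := by nlinarith
    exact (div_lt_div_iff_of_pos_right hden).mpr h3
  have hmapcont : Continuous hmap := by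
    apply Continuous.subtype_mk
    exact ((continuous_subtype_val.comp hcont).add
      (continuous_const.mul continuous_subtype_val)).div_const _
  have hmap0 : hmap 0 = 0 := by
    apply Subtype.ext
    simp [hmapdef, hσend0]
  have hmap1 : hmap 1 = 1 := by
    apply Subtype.ext
    simp only [hmapdef, hσend1]
    push_cast
    rw [mul_one, div_eq_one_iff_eq hden.ne']
  have hmapsurj : Function.Surjective hmap := by
    intro y
    have hy : y ∈ Set.Icc (hmap 0) (hmap 1) := by
      rw [hmap0, hmap1]
      exact ⟨unitInterval.nonneg', unitInterval.le_one'⟩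
    obtain ⟨x, _, hx⟩ := intermediate_value_Icc (unitInterval.nonneg' (t := 1))
      hmapcont.continuousOn hy
    exact ⟨x, hx⟩
  -- the inverse homeomorphism γ
  set e : unitInterval ≃o unitInterval :=
    StrictMono.orderIsoOfSurjective hmap hsm hmapsurj with hedef
  have hecoe : ∀ t, e t = hmap t := fun t => by
    rw [hedef, StrictMono.coe_orderIsoOfSurjective]
  set γ : unitInterval → unitInterval := fun t => e.symm t with hγdef
  have hγsm : StrictMono γ := e.symm.strictMono
  have hγcont : Continuous γ := e.symm.toHomeomorph.continuous
  have hγbij : Function.Bijective γ := e.symm.bijective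
  have hγid : ∀ t, hmap (γ t) = t := fun t => by
    rw [hγdef, ← hecoe]; exact e.apply_symm_apply t
  -- the key identity:  σ₀ (γ t) - t = δ (t - γ t)
  have hkey : ∀ t : unitInterval, (σ₀ (γ t) : ℝ) - t = δ * ((t : ℝ) - γ t) := by
    intro t
    have h1 : ((σ₀ (γ t) : ℝ) + δ * γ t) / (1 + δ) = t := by
      have := hγid t
      rw [hmapdef] at this
      exact congrArg Subtype.val this
    field_simp at h1
    linarith
  have hbound : ∀ t : unitInterval, |(σ₀ (γ t) : ℝ) - t| ≤ δ := by
    intro t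
    rw [hkey t, abs_mul, abs_of_pos hδpos]
    have h2 : |(t : ℝ) - γ t| ≤ 1 := by
      rw [abs_le]
      constructor
      · have := t.2.1; have := (γ t).2.2; linarith
      · have := t.2.2; have := (γ t).2.1; linarith
    nlinarith
  -- f = F ∘ γ is càdlàg
  have hγ1 : γ 1 = 1 := by
    rw [hγdef]
    exact e.symm_apply_eq.mpr (by rw [hecoe, hmap1])
  have hγ0 : γ 0 = 0 := by
    rw [hγdef]
    exact e.symm_apply_eq.mpr (by rw [hecoe, hmap0])
  have hfc : Cadlag (F ∘ γ) := by
    constructor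
    · intro t ht
      have ht1 : t ≠ 1 := fun h => by rw [h] at ht; simp at ht
      have hγt1 : (γ t : ℝ) < 1 := by
        refine lt_of_le_of_ne ((γ t).2.2) (fun h => ht1 ?_)
        have : γ t = 1 := Subtype.ext (by simpa using h)
        rw [← hγ1] at this
        exact hγbij.1 this
      have h1 := hF.1 (γ t) hγt1
      exact h1.comp (ContinuousWithinAt.tendsto_nhdsWithin
        hγcont.continuousWithinAt (fun x hx => hγsm hx))
    · intro t ht
      have ht0 : t ≠ 0 := fun h => by rw [h] at ht; simp at ht
      have hγt0 : 0 < (γ t : ℝ) := by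
        refine lt_of_le_of_ne ((γ t).2.1) (fun h => ht0 ?_)
        have : γ t = 0 := Subtype.ext (by simpa using h.symm)
        rw [← hγ0] at this
        exact hγbij.1 this
      obtain ⟨l, hl⟩ := hF.2 (γ t) hγt0
      exact ⟨l, hl.comp (ContinuousWithinAt.tendsto_nhdsWithin
        hγcont.continuousWithinAt (fun x hx => hγsm hx))⟩
  refine ⟨F ∘ γ, hfc, ?_⟩
  -- estimate rhoPlus
  have hbdd : BddBelow { c : ℝ | ∃ γ' : unitInterval → unitInterval, IsIncHomeo γ' ∧
      (⨆ t : unitInterval, |(F, σ₀).1 (γ' t) - ((F ∘ γ : unitInterval → ℝ), (id : unitInterval → unitInterval)).1 t|) +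
      (⨆ t : unitInterval, |((F, σ₀).2 (γ' t) : ℝ) - (((F ∘ γ : unitInterval → ℝ), (id : unitInterval → unitInterval)).2 t : ℝ)|) = c } := by
    refine ⟨0, fun c hc => ?_⟩
    obtain ⟨γ', _, hc⟩ := hc
    rw [← hc]
    exact add_nonneg (Real.iSup_nonneg fun t => abs_nonneg _)
      (Real.iSup_nonneg fun t => abs_nonneg _)
  have hmemS : (⨆ t : unitInterval, |(F, σ₀).1 (γ t) - ((F ∘ γ : unitInterval → ℝ), (id : unitInterval → unitInterval)).1 t|) +
      (⨆ t : unitInterval, |((F, σ₀).2 (γ t) : ℝ) - (((F ∘ γ : unitInterval → ℝ), (id : unitInterval → unitInterval)).2 t : ℝ)|) ∈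
      { c : ℝ | ∃ γ' : unitInterval → unitInterval, IsIncHomeo γ' ∧
      (⨆ t : unitInterval, |(F, σ₀).1 (γ' t) - ((F ∘ γ : unitInterval → ℝ), (id : unitInterval → unitInterval)).1 t|) +
      (⨆ t : unitInterval, |((F, σ₀).2 (γ' t) : ℝ) - (((F ∘ γ : unitInterval → ℝ), (id : unitInterval → unitInterval)).2 t : ℝ)|) = c } :=
    ⟨γ, ⟨hγcont, hγsm, hγbij⟩, rfl⟩
  calc rhoPlus (F, σ₀) (F ∘ γ, id)
      ≤ _ := csInf_le hbdd hmemS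
    _ = ⨆ t : unitInterval, |(σ₀ (γ t) : ℝ) - (t : ℝ)| := by
        simp [Function.comp]
    _ ≤ δ := Real.iSup_le hbound hδpos.le
    _ < ε := by rw [hδdef]; linarith
end

section
/- If γ_n are increasing homeomorphisms of [0,1], σ_n, σ ∈ Σ, and sup_t |σ_n(γ_n(t)) − σ(t)| → 0, then for every s ∈ (0,1) at which the right-continuous inverse σ⁻¹ is continuous, one has (γ_n⁻¹ ∘ σ_n⁻¹)(s) → σ⁻¹(s), where σ_n⁻¹ and σ⁻¹ denote right-continuous inverses. -/
open Filter

lemma rcInv_spec {σ : unitInterval → unitInterval} (hσ : InSigma σ) (s : unitInterval) :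
    σ (rcInv σ s) ≤ s := by
  have hne : {t : unitInterval | σ t ≤ s}.Nonempty := by
    obtain ⟨t, ht⟩ := hσ.2.2 0
    refine ⟨0, ?_⟩
    have h0 : σ 0 ≤ σ t := hσ.2.1 (by exact_mod_cast t.2.1)
    simp only [Set.mem_setOf_eq]
    exact le_trans (ht ▸ h0) (by exact_mod_cast s.2.1)
  have hc : IsClosed {t : unitInterval | σ t ≤ s} :=
    IsClosed.preimage hσ.1 isClosed_Iic
  exact hc.sSup_mem hne

lemma le_rcInv_iff {σ : unitInterval → unitInterval} (hσ : InSigma σ) {t s : unitInterval} :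
    t ≤ rcInv σ s ↔ σ t ≤ s :=
  ⟨fun h => (hσ.2.1 h).trans (rcInv_spec hσ s), fun h => le_sSup h⟩

lemma rcInv_comp {γ σ : unitInterval → unitInterval} (hγ : IsIncHomeo γ) (s : unitInterval) :
    Function.invFun γ (rcInv σ s) = rcInv (fun t => σ (γ t)) s := by
  let e : unitInterval ≃o unitInterval :=
    StrictMono.orderIsoOfSurjective γ hγ.2.1 hγ.2.2.2
  have hkey : γ (rcInv (fun t => σ (γ t)) s) = rcInv σ s := by
    have h1 : γ (sSup {t : unitInterval | σ (γ t) ≤ s})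
        = sSup (γ '' {t : unitInterval | σ (γ t) ≤ s}) := by
      have := e.map_sSup {t : unitInterval | σ (γ t) ≤ s}
      rw [← sSup_image] at this
      exact this
    have h2 : γ '' {t : unitInterval | σ (γ t) ≤ s} = {t : unitInterval | σ t ≤ s} := by
      have : {t : unitInterval | σ (γ t) ≤ s} = γ ⁻¹' {t : unitInterval | σ t ≤ s} := rfl
      rw [this, Set.image_preimage_eq _ hγ.2.2.2]
    rw [rcInv, rcInv, h1, h2]
  rw [← hkey, Function.leftInverse_invFun hγ.2.2.1]

theorem inverse_convergence (γn : ℕ → unitInterval → unitInterval)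
    (σn : ℕ → unitInterval → unitInterval) (σ₀ : unitInterval → unitInterval)
    (hγ : ∀ n, IsIncHomeo (γn n)) (hσn : ∀ n, InSigma (σn n)) (hσ : InSigma σ₀)
    (h : Filter.Tendsto
      (fun n => ⨆ t : unitInterval, |(σn n (γn n t) : ℝ) - (σ₀ t : ℝ)|)
      Filter.atTop (nhds 0)) :
    ∀ s : unitInterval, 0 < (s : ℝ) → (s : ℝ) < 1 → ContinuousAt (rcInv σ₀) s →
      Filter.Tendsto (fun n => Function.invFun (γn n) (rcInv (σn n) s)) Filter.atTop
        (nhds (rcInv σ₀ s)) := by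
  intro s hs0 hs1 hcont
  set τ : ℕ → unitInterval → unitInterval := fun n t => σn n (γn n t) with hτ
  have hτS : ∀ n, InSigma (τ n) := fun n =>
    ⟨(hσn n).1.comp (hγ n).1, (hσn n).2.1.comp (hγ n).2.1.monotone,
      (hσn n).2.2.comp (hγ n).2.2.2⟩
  have heq : ∀ n, Function.invFun (γn n) (rcInv (σn n) s) = rcInv (τ n) s := fun n =>
    rcInv_comp (hγ n) s
  simp only [heq]
  set T : unitInterval := rcInv σ₀ s with hT
  rw [tendsto_subtype_rng]
  rw [Metric.tendsto_atTop]
  intro ε hε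
  -- from continuity, get δ
  obtain ⟨δ₀, hδ₀, hδ⟩ := Metric.continuousAt_iff.mp hcont (ε/2) (by linarith)
  set δ : ℝ := min δ₀ (min (s:ℝ) (1 - (s:ℝ))) with hδdef
  have hδpos : 0 < δ := lt_min hδ₀ (lt_min hs0 (by linarith))
  have hδle : δ ≤ δ₀ := min_le_left _ _
  have hδs : δ ≤ (s:ℝ) := le_trans (min_le_right _ _) (min_le_left _ _)
  have hδs1 : δ ≤ 1 - (s:ℝ) := le_trans (min_le_right _ _) (min_le_right _ _)
  -- define s⁻ and s⁺
  set sm : unitInterval := ⟨(s:ℝ) - δ/2, by constructor <;> [linarith; linarith [s.2.2]]⟩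
  set sp : unitInterval := ⟨(s:ℝ) + δ/2, by constructor <;> [linarith [s.2.1]; linarith]⟩
  have hdm : dist sm s < δ₀ := by
    rw [Subtype.dist_eq]; simp only [Real.dist_eq]
    rw [show ((sm:ℝ) - (s:ℝ)) = -(δ/2) by simp [sm]]
    rw [abs_neg, abs_of_pos (by linarith)]; linarith
  have hdp : dist sp s < δ₀ := by
    rw [Subtype.dist_eq]; simp only [Real.dist_eq]
    rw [show ((sp:ℝ) - (s:ℝ)) = δ/2 by simp [sp]]
    rw [abs_of_pos (by linarith)]; linarith
  have hTm := hδ hdm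
  have hTp := hδ hdp
  rw [Subtype.dist_eq, Real.dist_eq, abs_lt] at hTm hTp
  -- eventually sup < δ/2
  have hev : ∀ᶠ n in atTop,
      (⨆ t : unitInterval, |(σn n (γn n t) : ℝ) - (σ₀ t : ℝ)|) < δ/2 :=
    h.eventually (Filter.Tendsto.eventually_lt_const (by linarith) tendsto_id)
  rw [eventually_atTop] at hev
  obtain ⟨N, hN⟩ := hev
  refine ⟨N, fun n hn => ?_⟩
  have hsup := hN n hn
  have hptw : ∀ t : unitInterval, |(τ n t : ℝ) - (σ₀ t : ℝ)| < δ/2 := by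
    intro t
    have hbdd : BddAbove (Set.range fun t : unitInterval =>
        |(σn n (γn n t) : ℝ) - (σ₀ t : ℝ)|) := by
      refine ⟨2, fun x hx => ?_⟩
      obtain ⟨t, rfl⟩ := hx
      have h1 := (σn n (γn n t)).2.1; have h2 := (σn n (γn n t)).2.2
      have h3 := (σ₀ t).2.1; have h4 := (σ₀ t).2.2
      rw [abs_le]; constructor <;> linarith
    exact lt_of_le_of_lt (le_ciSup hbdd t) hsup
  rw [Real.dist_eq, abs_lt]
  constructor
  · -- lower bound : T - ε < rcInv (τ n) s
    have key : sm ≤ s → True := fun _ => trivial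
    have h1 : (rcInv σ₀ sm : ℝ) > (T:ℝ) - ε/2 := by linarith [hTm.1]
    have h2 : (σ₀ (rcInv σ₀ sm) : ℝ) ≤ (sm : ℝ) := by
      exact_mod_cast rcInv_spec hσ sm
    have h3 : (τ n (rcInv σ₀ sm) : ℝ) < (s : ℝ) := by
      have := hptw (rcInv σ₀ sm)
      rw [abs_lt] at this
      have : (τ n (rcInv σ₀ sm) : ℝ) < (σ₀ (rcInv σ₀ sm) : ℝ) + δ/2 := by linarith [this.2]
      simp only [sm] at h2
      linarith
    have h4 : rcInv σ₀ sm ≤ rcInv (τ n) s := by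
      rw [le_rcInv_iff (hτS n)]
      exact_mod_cast le_of_lt h3
    have := Subtype.coe_le_coe.mpr h4
    linarith
  · -- upper bound : rcInv (τ n) s < T + ε
    by_contra hcon
    push_neg at hcon
    have hTple : (rcInv σ₀ sp : ℝ) < (T:ℝ) + ε/2 := by linarith [hTp.2]
    have hlt : rcInv σ₀ sp < rcInv (τ n) s := by
      rw [← Subtype.coe_lt_coe]
      linarith
    have hσgt : sp < σ₀ (rcInv (τ n) s) := by
      by_contra hc
      push_neg at hc
      exact absurd ((le_rcInv_iff hσ).mpr hc) (not_le.mpr hlt)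
    have hσgt' : (s:ℝ) + δ/2 < (σ₀ (rcInv (τ n) s) : ℝ) := by
      exact_mod_cast hσgt
    have hτle : (τ n (rcInv (τ n) s) : ℝ) ≤ (s:ℝ) := by
      exact_mod_cast rcInv_spec (hτS n) s
    have := hptw (rcInv (τ n) s)
    rw [abs_lt] at this
    linarith [this.1]
end

section
/- Any Cauchy sequence {f_n} in (D[0,1], ρ) converges pointwise, except possibly on an at most countable subset of [0,1), to a càdlàg function; namely there exists g ∈ D[0,1] and an at most countable set N ⊆ [0,1) such that f_n(s) → g(s) for all s ∈ [0,1] \ N. -/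
open Filter

/-!
Pass to a subsequence `y k = f (φ k)` with `ρ(y k, f n) < 2⁻ᵏ` for `n ≥ φ k`, and choose increasing
homeomorphisms `γ k` almost realising `ρ(y k, y (k + 1))`. For `Φ k = γ (k - 1) ∘ ⋯ ∘ γ 0`, both
`y k ∘ Φ k` and `Φ k` are uniformly Cauchy; their limits are a càdlàg `F` and a continuous
non-decreasing surjection `σ`, and `(f n, id)` converges to `(F, σ)` in `ρ⁺`. Then `f n` is
uniformly close to `F` at points whose `σ`-image is close to `s`. When `s` has a single
`σ`-preimage `t`, compactness forces these points close to `t`; if moreover `F` is continuous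
at `t`, then `f n s → F t = F (σ⁻¹ s)`, where `σ⁻¹` is the right-continuous inverse, which keeps
`F ∘ σ⁻¹` càdlàg. The exceptional `s` are the plateau values of the monotone `σ` and the images
of the jumps of `F`, countably many; `s = 1` is fixed by every homeomorphism.
-/
open Set Topology Function Bornology

local notation "I" => unitInterval

section LeftLim

variable {α β : Type*} [LinearOrder α] [TopologicalSpace α] [OrderTopology α]
  [TopologicalSpace β] [RegularSpace β]

theorem tendsto_leftLim_nhdsGT {f : α → β} {a : α} {b : β} (h : Tendsto f (𝓝[>] a) (𝓝 b)) :
    Tendsto (leftLim f) (𝓝[>] a) (𝓝 b) := by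
  rcases (Ioi a).eq_empty_or_nonempty with ha | ⟨a', ha'⟩
  · simp [ha]
  refine (closed_nhds_basis b).tendsto_right_iff.2 fun s ⟨hs, hsc⟩ => ?_
  obtain ⟨u, hau, hu⟩ := (mem_nhdsGT_iff_exists_Ioo_subset' ha').1 (h hs)
  filter_upwards [Ioo_mem_nhdsGT hau] with c hc
  exact hsc.mem_of_mapClusterPt (mapClusterPt_leftLim f c)
    (mem_of_superset (mem_nhdsWithin_of_mem_nhds (isOpen_Ioo.mem_nhds hc)) hu)

end LeftLim

section UniformLimit

variable {X β : Type*} [PseudoMetricSpace β] [CompleteSpace β]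

theorem exists_tendstoUniformly_of_dist_succ_le {u : ℕ → X → β}
    (hu : ∀ n x, dist (u n x) (u (n + 1) x) ≤ 1 / 2 ^ n) :
    ∃ U, TendstoUniformly u U atTop := by
  have hu' : ∀ x n, dist (u n x) (u (n + 1) x) ≤ 2 / 2 / 2 ^ n := by
    simpa using fun x n => hu n x
  choose U hU using fun x => cauchySeq_tendsto_of_complete (cauchySeq_of_le_geometric_two (hu' x))
  refine ⟨U, Metric.tendstoUniformly_iff.2 fun ε hε => ?_⟩
  have h2pow : Tendsto (fun n : ℕ => (2 : ℝ) / 2 ^ n) atTop (𝓝 0) :=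
    tendsto_const_nhds.div_atTop (tendsto_pow_atTop_atTop_of_one_lt one_lt_two)
  filter_upwards [h2pow.eventually (gt_mem_nhds hε)] with n hn x
  rw [dist_comm]
  exact (dist_le_of_le_geometric_two_of_tendsto (hu' x) (hU x) n).trans_lt hn

theorem TendstoUniformly.exists_tendsto {G : ℕ → X → β} {F : X → β} {l : Filter X} {L : ℕ → β}
    (h : TendstoUniformly G F atTop) (hL : ∀ n, Tendsto (G n) l (𝓝 (L n))) :
    ∃ ℓ, Tendsto F l (𝓝 ℓ) := by
  rcases eq_or_neBot l with rfl | hl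
  · exact ⟨L 0, tendsto_bot⟩
  have hcauchy : CauchySeq L := by
    refine Metric.cauchySeq_iff'.2 fun ε hε => ?_
    obtain ⟨N, hN⟩ := eventually_atTop.1 (Metric.tendstoUniformly_iff.1 h (ε / 3) (by positivity))
    refine ⟨N, fun n hn => ?_⟩
    have hle : dist (L n) (L N) ≤ 2 * (ε / 3) :=
      le_of_tendsto ((hL n).dist (hL N)) (Eventually.of_forall fun x =>
        (dist_triangle_left _ _ (F x)).trans (add_le_add (hN n hn x).le (hN N le_rfl x).le)
          |>.trans_eq (two_mul _).symm)
    linarith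
  obtain ⟨ℓ, hℓ⟩ := cauchySeq_tendsto_of_complete hcauchy
  exact ⟨ℓ, h.tendsto_of_eventually_tendsto (Eventually.of_forall hL) hℓ⟩

end UniformLimit

section Cadlag

variable {F : I → ℝ}

theorem cadlag_iff : Cadlag F ↔
    (∀ t, ContinuousWithinAt F (Ici t) t) ∧ ∀ t, ∃ l, Tendsto F (𝓝[<] t) (𝓝 l) := by
  refine ⟨fun ⟨hr, hl⟩ => ⟨fun t => continuousWithinAt_Ioi_iff_Ici.1 ?_, fun t => ?_⟩,
    fun ⟨hr, hl⟩ => ⟨fun t _ => (hr t).mono Ioi_subset_Ici_self, fun t _ => hl t⟩⟩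
  · by_cases ht : (t : ℝ) < 1
    · exact hr t ht
    · have : Ioi t = ∅ := eq_empty_of_forall_notMem fun u hu =>
        ht ((Subtype.coe_lt_coe.2 hu).trans_le u.2.2)
      simp [ContinuousWithinAt, this]
  · by_cases ht : 0 < (t : ℝ)
    · exact hl t ht
    · have : Iio t = ∅ := eq_empty_of_forall_notMem fun u hu =>
        ht (u.2.1.trans_lt (Subtype.coe_lt_coe.2 hu))
      exact ⟨0, by simp [this]⟩

theorem Cadlag.continuousWithinAt_Ici_s18 (hF : Cadlag F) (t : I) :
    ContinuousWithinAt F (Ici t) t :=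
  (cadlag_iff.1 hF).1 t

theorem Cadlag.continuousWithinAt_Ioi (hF : Cadlag F) (t : I) :
    ContinuousWithinAt F (Ioi t) t :=
  (hF.continuousWithinAt_Ici_s18 t).mono Ioi_subset_Ici_self

theorem Cadlag.tendsto_leftLim (hF : Cadlag F) (t : I) :
    Tendsto F (𝓝[<] t) (𝓝 (leftLim F t)) :=
  tendsto_leftLim_of_tendsto ((cadlag_iff.1 hF).2 t)

theorem Cadlag.continuousAt_of_leftLim_eq (hF : Cadlag F) {t : I} (h : leftLim F t = F t) :
    ContinuousAt F t :=
  continuousAt_iff_continuous_left_right.2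
    ⟨continuousWithinAt_Iio_iff_Iic.1 (by rw [ContinuousWithinAt, ← h]; exact hF.tendsto_leftLim t),
      hF.continuousWithinAt_Ici_s18 t⟩

theorem Cadlag.isBounded_range_s18 (hF : Cadlag F) : IsBounded (range F) := by
  rw [← image_univ]
  refine isCompact_univ.induction_on (p := fun s => IsBounded (F '' s)) (by simp)
    (fun s t hst ht => ht.subset (image_mono hst))
    (fun s t hs ht => by simpa only [image_union] using hs.union ht) fun x _ => ?_
  obtain ⟨s, hs, hsb⟩ := Metric.exists_isBounded_image_of_tendsto (hF.tendsto_leftLim x)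
  obtain ⟨t, ht, htb⟩ := Metric.exists_isBounded_image_of_tendsto (hF.continuousWithinAt_Ici_s18 x)
  refine ⟨s ∪ t, ?_, by simpa only [image_union] using hsb.union htb⟩
  rw [nhdsWithin_univ, ← nhdsLT_sup_nhdsGE]
  exact union_mem_sup hs ht

theorem Cadlag.finite_setOf_le_dist_leftLim (hF : Cadlag F) {ε : ℝ} (hε : 0 < ε) :
    {t | ε ≤ dist (F t) (leftLim F t)}.Finite := by
  have hsmall : ∀ a, ∀ᶠ t in 𝓝[≠] a, dist (F t) (leftLim F t) < ε := by
    intro a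
    have hleft : Tendsto (leftLim F) (𝓝[<] a) (𝓝 (leftLim F a)) :=
      (continuousWithinAt_leftLim_Iic (hF.tendsto_leftLim a)).tendsto.mono_left
        (nhdsWithin_mono _ Iio_subset_Iic_self)
    have hright := hF.continuousWithinAt_Ioi a
    have hjumpL : Tendsto (fun t => dist (F t) (leftLim F t)) (𝓝[<] a) (𝓝 0) := by
      simpa using (hF.tendsto_leftLim a).dist hleft
    have hjumpR : Tendsto (fun t => dist (F t) (leftLim F t)) (𝓝[>] a) (𝓝 0) := by
      simpa using hright.tendsto.dist (tendsto_leftLim_nhdsGT hright)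
    rw [← nhdsLT_sup_nhdsGT, eventually_sup]
    exact ⟨hjumpL.eventually (gt_mem_nhds hε), hjumpR.eventually (gt_mem_nhds hε)⟩
  have := cofinite_le_codiscrete (mem_codiscrete (S := {t | dist (F t) (leftLim F t) < ε}).2
    fun a => disjoint_principal_right.2 (by rw [compl_compl]; exact hsmall a))
  simpa only [mem_cofinite, compl_ofPred, not_lt] using this

theorem Cadlag.countable_not_continuousAt (hF : Cadlag F) :
    {t | ¬ContinuousAt F t}.Countable := by
  refine (countable_iUnion fun n : ℕ => (hF.finite_setOf_le_dist_leftLim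
    (Nat.one_div_pos_of_nat (n := n))).countable).mono fun t ht => ?_
  have hpos : 0 < dist (F t) (leftLim F t) :=
    dist_pos.2 fun h => ht (hF.continuousAt_of_leftLim_eq h.symm)
  obtain ⟨n, hn⟩ := exists_nat_one_div_lt hpos
  exact mem_iUnion.2 ⟨n, hn.le⟩

theorem Cadlag.of_tendstoUniformly {G : ℕ → I → ℝ} (hG : ∀ n, Cadlag (G n))
    (h : TendstoUniformly G F atTop) : Cadlag F := by
  refine cadlag_iff.2 ⟨fun t => ?_, fun t => h.exists_tendsto fun n => (hG n).tendsto_leftLim t⟩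
  refine continuousWithinAt_of_locally_uniform_approx_of_continuousWithinAt self_mem_Ici
    fun u hu => ?_
  obtain ⟨n, hn⟩ := (h u hu).exists
  exact ⟨univ, univ_mem, G n, (hG n).continuousWithinAt_Ici_s18 t, fun y _ => hn y⟩

theorem Cadlag.comp_monotone (hF : Cadlag F) {φ : I → I} (hφ : Monotone φ)
    (hφr : ∀ s, ContinuousWithinAt φ (Ici s) s) : Cadlag (F ∘ φ) := by
  refine cadlag_iff.2 ⟨fun s => (hF.continuousWithinAt_Ici_s18 (φ s)).comp (hφr s)
    fun u hu => hφ hu, fun s => ?_⟩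
  set L := sSup (φ '' Iio s)
  have hle : ∀ u ∈ Iio s, φ u ≤ L := fun u hu => le_sSup (mem_image_of_mem φ hu)
  by_cases hattained : ∃ s₀ < s, φ s₀ = L
  · obtain ⟨s₀, hs₀, hφs₀⟩ := hattained
    refine ⟨F L, tendsto_const_nhds.congr' ?_⟩
    filter_upwards [Ioo_mem_nhdsLT hs₀] with u hu
    rw [comp_apply, le_antisymm (hle u hu.2) (hφs₀ ▸ hφ hu.1.le)]
  · push Not at hattained
    have hφL : Tendsto φ (𝓝[<] s) (𝓝[<] L) :=
      tendsto_nhdsWithin_iff.2 ⟨hφ.tendsto_nhdsLT s, eventually_nhdsWithin_of_forall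
        fun u hu => (hle u hu).lt_of_ne (hattained u hu)⟩
    exact ⟨_, (hF.tendsto_leftLim L).comp hφL⟩

end Cadlag

namespace IsIncHomeo

variable {γ δ : I → I}

theorem continuous (h : IsIncHomeo γ) : Continuous γ := h.1

theorem monotone (h : IsIncHomeo γ) : Monotone γ := h.2.1.monotone

theorem surjective (h : IsIncHomeo γ) : Surjective γ := h.2.2.2

protected theorem id : IsIncHomeo id :=
  ⟨continuous_id, strictMono_id, bijective_id⟩

theorem comp (hγ : IsIncHomeo γ) (hδ : IsIncHomeo δ) : IsIncHomeo (γ ∘ δ) :=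
  ⟨hγ.1.comp hδ.1, hγ.2.1.comp hδ.2.1, hγ.2.2.comp hδ.2.2⟩

theorem map_zero (h : IsIncHomeo γ) : γ 0 = 0 := by
  obtain ⟨a, ha⟩ := h.surjective 0
  exact le_antisymm ((h.monotone unitInterval.nonneg').trans_eq ha) unitInterval.nonneg'

theorem map_one (h : IsIncHomeo γ) : γ 1 = 1 := by
  obtain ⟨a, ha⟩ := h.surjective 1
  exact le_antisymm unitInterval.le_one' (ha.symm.trans_le (h.monotone unitInterval.le_one'))

end IsIncHomeo

theorem Cadlag.comp_isIncHomeo {F : I → ℝ} {γ : I → I} (hF : Cadlag F) (hγ : IsIncHomeo γ) :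
    Cadlag (F ∘ γ) :=
  hF.comp_monotone hγ.monotone fun _ => hγ.continuous.continuousWithinAt

theorem exists_isIncHomeo_of_skorokhodDist_lt {p q : I → ℝ} (hp : IsBounded (range p))
    (hq : IsBounded (range q)) {ε : ℝ} (h : skorokhodDist p q < ε) :
    ∃ γ, IsIncHomeo γ ∧ ∀ t, dist (p t) (q (γ t)) ≤ ε ∧ dist t (γ t) ≤ ε := by
  obtain ⟨Cp, hCp⟩ := hp.exists_norm_le
  obtain ⟨Cq, hCq⟩ := hq.exists_norm_le
  have hsup_nonneg : ∀ g : I → ℝ, 0 ≤ ⨆ s, |g s| := fun g => Real.iSup_nonneg fun _ => abs_nonneg _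
  have hbdd : BddBelow {c : ℝ | ∃ γ, IsIncHomeo γ ∧
      (⨆ s, |p s - q (γ s)|) + (⨆ s : I, |(s : ℝ) - γ s|) = c} :=
    ⟨0, by rintro _ ⟨γ, -, rfl⟩; exact add_nonneg (hsup_nonneg _) (hsup_nonneg _)⟩
  obtain ⟨_, ⟨γ, hγ, rfl⟩, hlt⟩ := (csInf_lt_iff hbdd ⟨_, id, IsIncHomeo.id, rfl⟩).1 h
  -- Without these bounds the `⨆` in `skorokhodDist` could be the junk value `0`.
  have hval : BddAbove (range fun s => |p s - q (γ s)|) := ⟨Cp + Cq, by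
    rintro _ ⟨s, rfl⟩
    exact (abs_sub _ _).trans (add_le_add (hCp _ ⟨s, rfl⟩) (hCq _ ⟨γ s, rfl⟩))⟩
  have htime : BddAbove (range fun s : I => |(s : ℝ) - γ s|) := ⟨1, by
    rintro _ ⟨s, rfl⟩
    exact abs_sub_le_iff.2 ⟨by linarith [s.2.2, (γ s).2.1], by linarith [s.2.1, (γ s).2.2]⟩⟩
  refine ⟨γ, hγ, fun t => ⟨?_, ?_⟩⟩
  · rw [Real.dist_eq]
    linarith [le_ciSup hval t, hsup_nonneg fun s : I => (s : ℝ) - γ s]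
  · rw [Subtype.dist_eq, Real.dist_eq]
    linarith [le_ciSup htime t, hsup_nonneg fun s => p s - q (γ s)]

theorem exists_strictMono_lt_one_div_two_pow {X : Type*} {d : X → X → ℝ} {x : ℕ → X}
    (h : ∀ ε : ℝ, 0 < ε → ∃ N : ℕ, ∀ m ≥ N, ∀ n ≥ N, d (x m) (x n) < ε) :
    ∃ φ : ℕ → ℕ, StrictMono φ ∧ ∀ k, ∀ n ≥ φ k, d (x (φ k)) (x n) < 1 / 2 ^ k :=
  extraction_forall_of_eventually (P := fun k m => ∀ n ≥ m, d (x m) (x n) < 1 / 2 ^ k) fun k => by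
    obtain ⟨N, hN⟩ := h (1 / 2 ^ k) (by positivity)
    filter_upwards [eventually_ge_atTop N] with m hm n hn using hN m hm n (hm.trans hn)

def compChain {α : Type*} (g : ℕ → α → α) : ℕ → α → α
  | 0 => id
  | k + 1 => g k ∘ compChain g k

theorem inSigma_of_tendstoUniformly {Φ : ℕ → I → I} {σ : I → I} (hΦ : ∀ k, IsIncHomeo (Φ k))
    (h : TendstoUniformly Φ σ atTop) : InSigma σ := by
  have hcont : Continuous σ := h.continuous (Frequently.of_forall fun k => (hΦ k).continuous)
  have hmono : Monotone σ := fun a b hab =>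
    le_of_tendsto_of_tendsto' (h.tendsto_at a) (h.tendsto_at b) fun k => (hΦ k).monotone hab
  have h0 : σ 0 = 0 := tendsto_nhds_unique (h.tendsto_at 0) <| by
    simp only [fun k => (hΦ k).map_zero, tendsto_const_nhds]
  have h1 : σ 1 = 1 := tendsto_nhds_unique (h.tendsto_at 1) <| by
    simp only [fun k => (hΦ k).map_one, tendsto_const_nhds]
  refine ⟨hcont, hmono, fun s => intermediate_value_univ 0 1 hcont ?_⟩
  rw [h0, h1]
  exact ⟨unitInterval.nonneg', unitInterval.le_one'⟩

/-- The turbofunctions `(f n, id)` converge to `(F, σ)` for the extended distance `rhoPlus`. -/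
def TendstoTurbo (f : ℕ → I → ℝ) (F : I → ℝ) (σ : I → I) : Prop :=
  ∀ ε > 0, ∀ᶠ n in atTop, ∃ ψ, IsIncHomeo ψ ∧ ∀ t, dist (F t) (f n (ψ t)) ≤ ε ∧ dist (σ t) (ψ t) ≤ ε

theorem tendstoTurbo_of_tendstoUniformly {f y : ℕ → I → ℝ} {Φ : ℕ → I → I} {F : I → ℝ}
    {σ : I → I} {c : ℕ → ℝ} (hΦ : ∀ k, IsIncHomeo (Φ k))
    (hF : TendstoUniformly (fun k t => y k (Φ k t)) F atTop) (hσ : TendstoUniformly Φ σ atTop)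
    (hc : Tendsto c atTop (𝓝 0))
    (hy : ∀ k, ∀ᶠ n in atTop, ∃ γ, IsIncHomeo γ ∧
      ∀ u, dist (y k u) (f n (γ u)) ≤ c k ∧ dist u (γ u) ≤ c k) :
    TendstoTurbo f F σ := by
  intro ε hε
  obtain ⟨k, hkF, hkσ, hkc⟩ := ((Metric.tendstoUniformly_iff.1 hF (ε / 2) (half_pos hε)).and
    ((Metric.tendstoUniformly_iff.1 hσ (ε / 2) (half_pos hε)).and
      (hc.eventually (gt_mem_nhds (half_pos hε))))).exists
  filter_upwards [hy k] with n ⟨γ, hγ, hγdist⟩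
  refine ⟨γ ∘ Φ k, hγ.comp (hΦ k), fun t => ⟨?_, ?_⟩⟩
  · rw [comp_apply]
    linarith [dist_triangle (F t) (y k (Φ k t)) (f n (γ (Φ k t))), hkF t, (hγdist (Φ k t)).1]
  · rw [comp_apply]
    linarith [dist_triangle (σ t) (Φ k t) (γ (Φ k t)), hkσ t, (hγdist (Φ k t)).2]

theorem exists_tendstoTurbo {f : ℕ → I → ℝ} (hf : ∀ n, Cadlag (f n))
    (hCauchy : ∀ ε : ℝ, 0 < ε → ∃ N : ℕ, ∀ m ≥ N, ∀ n ≥ N, skorokhodDist (f m) (f n) < ε) :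
    ∃ F σ, Cadlag F ∧ InSigma σ ∧ TendstoTurbo f F σ := by
  obtain ⟨φ, hφ, hclose⟩ := exists_strictMono_lt_one_div_two_pow hCauchy
  have hy : ∀ k, ∀ n ≥ φ k, ∃ γ, IsIncHomeo γ ∧
      ∀ u, dist (f (φ k) u) (f n (γ u)) ≤ 1 / 2 ^ k ∧ dist u (γ u) ≤ 1 / 2 ^ k :=
    fun k n hn => exists_isIncHomeo_of_skorokhodDist_lt (hf _).isBounded_range_s18
      (hf n).isBounded_range_s18 (hclose k n hn)
  choose γ hγ hγdist using fun k => hy k (φ (k + 1)) (hφ.monotone k.le_succ)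
  have hΦ : ∀ k, IsIncHomeo (compChain γ k) := by
    intro k
    induction k with
    | zero => exact .id
    | succ k ih => exact (hγ k).comp ih
  obtain ⟨F, hF⟩ := exists_tendstoUniformly_of_dist_succ_le
    (u := fun k t => f (φ k) (compChain γ k t)) fun k t => (hγdist k _).1
  obtain ⟨σ, hσ⟩ := exists_tendstoUniformly_of_dist_succ_le
    (u := compChain γ) fun k t => (hγdist k _).2
  refine ⟨F, σ, .of_tendstoUniformly (fun k => (hf _).comp_isIncHomeo (hΦ k)) hF,
    inSigma_of_tendstoUniformly hΦ hσ, tendstoTurbo_of_tendstoUniformly hΦ hF hσ ?_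
    fun k => eventually_atTop.2 ⟨φ k, hy k⟩⟩
  exact tendsto_const_nhds.div_atTop (tendsto_pow_atTop_atTop_of_one_lt one_lt_two)

theorem rcInv_monotone (σ : I → I) : Monotone (rcInv σ) :=
  fun _ _ hss' => sSup_le_sSup fun _ ht => le_trans ht hss'

theorem rcInv_one (σ : I → I) : rcInv σ 1 = 1 :=
  top_unique (le_sSup (le_top : σ 1 ≤ ⊤))

namespace InSigma

variable {σ : I → I}

theorem continuous (hσ : InSigma σ) : Continuous σ := hσ.1

theorem monotone (hσ : InSigma σ) : Monotone σ := hσ.2.1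

theorem surjective (hσ : InSigma σ) : Surjective σ := hσ.2.2

theorem apply_rcInv (hσ : InSigma σ) (s : I) : σ (rcInv σ s) = s := by
  obtain ⟨a, rfl⟩ := hσ.surjective s
  have hmem : rcInv σ (σ a) ∈ {t | σ t ≤ σ a} :=
    (isClosed_le hσ.continuous continuous_const).sSup_mem ⟨a, le_refl (σ a)⟩
  exact le_antisymm hmem (hσ.monotone (le_sSup (le_refl (σ a))))

theorem continuousWithinAt_rcInv (hσ : InSigma σ) (s : I) :
    ContinuousWithinAt (rcInv σ) (Ici s) s := by
  refine tendsto_order.2 ⟨fun a ha => ?_, fun b hb => ?_⟩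
  · filter_upwards [self_mem_nhdsWithin] with u hu using ha.trans_le (rcInv_monotone σ hu)
  · have hs : s < σ b := lt_of_not_ge fun h => hb.not_ge (le_sSup h)
    filter_upwards [nhdsWithin_le_nhds (Iio_mem_nhds hs)] with u hu
    exact hσ.monotone.reflect_lt ((hσ.apply_rcInv u).trans_lt hu)

theorem cadlag_comp_rcInv (hσ : InSigma σ) {F : I → ℝ} (hF : Cadlag F) :
    Cadlag (F ∘ rcInv σ) :=
  hF.comp_monotone (rcInv_monotone σ) hσ.continuousWithinAt_rcInv

theorem preimage_subset_rcInv (hσ : InSigma σ) {s : I}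
    (hs : s ∉ {c | ∃ x y, x < y ∧ σ x = c ∧ σ y = c}) : σ ⁻¹' {s} ⊆ {rcInv σ s} := by
  intro t (ht : σ t = s)
  rcases lt_trichotomy t (rcInv σ s) with hlt | heq | hgt
  · exact absurd ⟨t, _, hlt, ht, hσ.apply_rcInv s⟩ hs
  · exact heq
  · exact absurd ⟨_, t, hgt, hσ.apply_rcInv s, ht⟩ hs

end InSigma

namespace TendstoTurbo

variable {f : ℕ → I → ℝ} {F : I → ℝ} {σ : I → I}

theorem tendsto_apply_one (h : TendstoTurbo f F σ) :
    Tendsto (fun n => f n 1) atTop (𝓝 (F 1)) := by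
  refine Metric.tendsto_nhds.2 fun ε hε => ?_
  filter_upwards [h (ε / 2) (half_pos hε)] with n ⟨ψ, hψ, hdist⟩
  have h1 := (hdist 1).1
  rw [hψ.map_one, dist_comm] at h1
  exact h1.trans_lt (half_lt_self hε)

theorem tendsto_apply (h : TendstoTurbo f F σ) (hσ : Continuous σ) {s t₀ : I}
    (hs : σ ⁻¹' {s} ⊆ {t₀}) (hF : ContinuousAt F t₀) :
    Tendsto (fun n => f n s) atTop (𝓝 (F t₀)) := by
  have hcomap : Tendsto F (comap σ (𝓝 s)) (𝓝 (F t₀)) :=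
    hF.tendsto.mono_left (hσ.isClosedMap.comap_nhds_le.trans (by simpa using nhdsSet_mono hs))
  refine Metric.tendsto_nhds.2 fun ε hε => ?_
  obtain ⟨η, hη, hball⟩ : ∃ η > 0, ∀ t, dist (σ t) s < η → dist (F t) (F t₀) < ε / 2 := by
    have := Metric.tendsto_nhds.1 hcomap (ε / 2) (half_pos hε)
    rw [eventually_comap, Metric.eventually_nhds_iff] at this
    obtain ⟨η, hη, hη'⟩ := this
    exact ⟨η, hη, fun t ht => hη' ht t rfl⟩
  filter_upwards [h (min (η / 2) (ε / 2)) (by positivity)] with n ⟨ψ, hψ, hdist⟩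
  obtain ⟨t, rfl⟩ := hψ.surjective s
  have hFt : dist (F t) (f n (ψ t)) ≤ ε / 2 := (hdist t).1.trans (min_le_right _ _)
  have hσt : dist (σ t) (ψ t) < η :=
    (hdist t).2.trans_lt ((min_le_left _ _).trans_lt (half_lt_self hη))
  calc dist (f n (ψ t)) (F t₀) ≤ dist (F t) (f n (ψ t)) + dist (F t) (F t₀) :=
        dist_triangle_left _ _ _
    _ < ε / 2 + ε / 2 := add_lt_add_of_le_of_lt hFt (hball t hσt)
    _ = ε := add_halves ε

end TendstoTurbo

theorem cauchy_pointwise_limit (f : ℕ → unitInterval → ℝ)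
    (hf : ∀ n, Cadlag (f n))
    (hCauchy : ∀ ε : ℝ, 0 < ε → ∃ N : ℕ, ∀ m ≥ N, ∀ n ≥ N,
      skorokhodDist (f m) (f n) < ε) :
    ∃ g : unitInterval → ℝ, Cadlag g ∧
      ∃ N : Set unitInterval, N.Countable ∧ (∀ s ∈ N, (s : ℝ) < 1) ∧
        ∀ s : unitInterval, s ∉ N →
          Filter.Tendsto (fun n => f n s) Filter.atTop (nhds (g s)) := by
  obtain ⟨F, σ, hF, hσ, hlim⟩ := exists_tendstoTurbo hf hCauchy
  set plateau := {c | ∃ x y, x < y ∧ σ x = c ∧ σ y = c}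
  refine ⟨F ∘ rcInv σ, hσ.cadlag_comp_rcInv hF, (plateau ∪ σ '' {t | ¬ContinuousAt F t}) \ {1},
    ((hσ.monotone.countable_setOfPred_two_preimages.union
      (hF.countable_not_continuousAt.image σ)).mono sdiff_subset),
    fun s hs => lt_of_le_of_ne s.2.2 fun h => hs.2 (Subtype.ext h), fun s hs => ?_⟩
  by_cases hs1 : s = 1
  · subst hs1
    rw [comp_apply, rcInv_one]
    exact hlim.tendsto_apply_one
  · have hsplateau : s ∉ plateau := fun h => hs ⟨Or.inl h, hs1⟩
    have hcont : ContinuousAt F (rcInv σ s) :=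
      by_contra fun h => hs ⟨Or.inr ⟨_, h, hσ.apply_rcInv s⟩, hs1⟩
    exact hlim.tendsto_apply hσ.continuous (hσ.preimage_subset_rcInv hsplateau) hcont
end
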